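/- For all games G, H, K over a poset A of atoms: if G ≤ H and H ≤ K then G ≤ K; if G ⊲ H and H ≤ K then G ⊲ K; and if G ≤ H and H ⊲ K then G ⊲ K. -/

import Mathlib

universe u

/-- The type of pre-games (normal-play combinatorial games), as formerly defined in Mathlib
(`SetTheory.PGame`), which has since been removed from Mathlib. -/
inductive SetTheory.PGame : Type (u + 1)
  | mk : ∀ α β : Type u, (α → SetTheory.PGame) → (β → SetTheory.PGame) → SetTheory.PGame

/-- The pre-game `0 = { | }`, as formerly defined in Mathlib. -/
instance SetTheory.PGame.instZeroPGame : Zero SetTheory.PGame :=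
  ⟨⟨PEmpty, PEmpty, PEmpty.elim, PEmpty.elim⟩⟩

/-- Combinatorial games over a poset `A` of atoms: either an atomic game `[a]` for an atom
`a : A`, or a composite game `⟨L|R⟩` where `L` and `R` are nonempty families of games
(the left and right options). -/
inductive PoGame (A : Type u) : Type (u + 1) where
  | atom : A → PoGame A
  | mk : (xl xr : Type u) → (xl → PoGame A) → (xr → PoGame A) →
      Nonempty xl → Nonempty xr → PoGame A

namespace PoGame

variable {A : Type u}

/-- `G` is an atomic game. -/
def IsAtomic : PoGame A → Prop
  | atom _ => True
  | mk _ _ _ _ _ _ => False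

/-- `G` is a left option of the game given as second argument. -/
def IsLeftOption (G : PoGame A) : PoGame A → Prop
  | atom _ => False
  | mk _ _ L _ _ _ => ∃ i, L i = G

/-- `G` is a right option of the game given as second argument. -/
def IsRightOption (G : PoGame A) : PoGame A → Prop
  | atom _ => False
  | mk _ _ _ R _ _ => ∃ j, R j = G

section Order

variable [PartialOrder A]

mutual
  /-- `Le G H` is the relation `G ≤ H` on games over the poset `A`, defined by mutual
  recursion with `Lf` (the relation `G ⊲ H`): `G ≤ H` iff every left option `G^L`
  satisfies `G^L ⊲ H`, every right option `H^R` satisfies `G ⊲ H^R`, and if `G` or `H`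
  is atomic then `G ⊲ H`. -/
  inductive Le : PoGame A → PoGame A → Prop
    | intro (G H : PoGame A)
        (hL : ∀ G', IsLeftOption G' G → Lf G' H)
        (hR : ∀ H', IsRightOption H' H → Lf G H')
        (hA : IsAtomic G ∨ IsAtomic H → Lf G H) : Le G H

  /-- `Lf G H` is the relation `G ⊲ H` on games over the poset `A`: it holds iff some
  right option `G^R` satisfies `G^R ≤ H`, or some left option `H^L` satisfies `G ≤ H^L`,
  or `G = [a]` and `H = [b]` are atomic with `a ≤ b` in `A`. -/
  inductive Lf : PoGame A → PoGame A → Prop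
    | rightOption (G H G' : PoGame A) (h : IsRightOption G' G) (hle : Le G' H) : Lf G H
    | leftOption (G H H' : PoGame A) (h : IsLeftOption H' H) (hle : Le G H') : Lf G H
    | atom (a b : A) (hab : a ≤ b) : Lf (atom a) (atom b)
end

/-- Two games are equivalent if `G ≤ H` and `H ≤ G`. -/
def GEquiv (G H : PoGame A) : Prop := Le G H ∧ Le H G

/-- `G` is locally monotone if `G ≤ G^L` for every left option `G^L` and `G^R ≤ G` for
every right option `G^R`. -/
def LocallyMonotone (G : PoGame A) : Prop :=
  (∀ G', IsLeftOption G' G → Le G G') ∧ (∀ G', IsRightOption G' G → Le G' G)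

/-- `G` is an option (left or right) of `H`. -/
def IsOption (G H : PoGame A) : Prop := IsLeftOption G H ∨ IsRightOption G H

/-- `G` is a position of `H`: `H` itself, an option of `H`, an option of an option, etc. -/
def IsPosition (G H : PoGame A) : Prop := Relation.ReflTransGen IsOption G H

/-- `G` is monotone if every position of `G` is locally monotone. -/
def Monotone (G : PoGame A) : Prop := ∀ K, IsPosition K G → LocallyMonotone K

end Order

/-- The 5-element linearly ordered set `L5 = {-3, -2, -1, 0, 1}`. -/
abbrev L5 : Type := {a : ℤ // -3 ≤ a ∧ a ≤ 1}

/-- `G` has mean `C`: an atomic game `[a]` has mean `a`, and a composite game has mean `C`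
iff every left option has mean `C + 1` and every right option has mean `C - 1`. -/
def HasMean : PoGame L5 → ℤ → Prop
  | atom a, C => (a : ℤ) = C
  | mk _ _ L R _ _, C => (∀ i, HasMean (L i) (C + 1)) ∧ (∀ j, HasMean (R j) (C - 1))

/-- The game `⟨G | H⟩` with a single left option `G` and a single right option `H`. -/
def ofPair (G H : PoGame A) : PoGame A :=
  mk PUnit PUnit (fun _ => G) (fun _ => H) ⟨PUnit.unit⟩ ⟨PUnit.unit⟩

/-- `⋆ = ⟨-1 | -3⟩`. -/
def star : PoGame L5 := ofPair (atom ⟨-1, by norm_num⟩) (atom ⟨-3, by norm_num⟩)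

/-- `M(G) = ⟨1 | G⟩`. -/
def M (G : PoGame L5) : PoGame L5 := ofPair (atom ⟨1, by norm_num⟩) G

/-- `P(G) = ⟨G | -2⟩`. -/
def P (G : PoGame L5) : PoGame L5 := ofPair G (atom ⟨-2, by norm_num⟩)

/-- `P⋆(G) = ⟨G | ⋆⟩`. -/
def Pstar (G : PoGame L5) : PoGame L5 := ofPair G star

/-- `Pn n G = P G` if `n` is odd, `P⋆ G` if `n` is even. -/
def Pn (n : ℕ) (G : PoGame L5) : PoGame L5 := if Odd n then P G else Pstar G

/-- The sequence `G_0 = [0]`, `G_{n+1} = M (Pn n (G_n))`. -/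
def Gseq : ℕ → PoGame L5
  | 0 => atom ⟨0, by norm_num⟩
  | n + 1 => M (Pn n (Gseq n))

/-- The normal-play game obtained from a game over `L5` by replacing every atom by the
normal-play game `0 = { | }`, keeping the tree of left and right options. -/
def np : PoGame L5 → SetTheory.PGame.{0}
  | atom _ => 0
  | mk xl xr L R _ _ => SetTheory.PGame.mk xl xr (fun i => np (L i)) (fun j => np (R j))

end PoGame

/-! Induction on the triple `(G, H, K)`, each step replacing one coordinate by one of its
options. Unfolding one level of `≤` or `⊲` reduces each of the three statements for a triple
to one of them for a smaller triple; the only base case is `[a] ⊲ [b]`, where transitivity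
of the order on `A` takes over. -/

namespace PoGame

variable {A : Type u}

theorem wf_isOption : WellFounded (IsOption : PoGame A → PoGame A → Prop) := by
  constructor
  intro G
  induction G with
  | atom _ => exact ⟨_, fun _ h => h.elim False.elim False.elim⟩
  | mk xl xr L R _ _ ihL ihR =>
    refine ⟨_, fun _ h => ?_⟩
    rcases h with ⟨i, rfl⟩ | ⟨j, rfl⟩
    exacts [ihL i, ihR j]

theorem isOption_induction₃ {C : PoGame A → PoGame A → PoGame A → Prop}
    (h : ∀ G H K, (∀ G', IsOption G' G → C G' H K) → (∀ H', IsOption H' H → C G H' K) →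
      (∀ K', IsOption K' K → C G H K') → C G H K)
    (G H K : PoGame A) : C G H K := by
  refine ((wf_isOption.prod_gameAdd wf_isOption).prod_gameAdd wf_isOption).induction
    (C := fun t => C t.1.1 t.1.2 t.2) ((G, H), K) fun ⟨⟨G, H⟩, K⟩ ih => ?_
  exact h G H K (fun G' hG => ih ((G', H), K) (.fst (.fst hG)))
    (fun H' hH => ih ((G, H'), K) (.fst (.snd hH))) (fun K' hK => ih ((G, H), K') (.snd hK))

variable [PartialOrder A] {G H K : PoGame A}

theorem le_atom_atom {a b : A} (h : a ≤ b) : Le (atom a) (atom b) :=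
  .intro _ _ (fun _ h => h.elim) (fun _ h => h.elim) fun _ => .atom a b h

theorem Le.isLeftOption_lf {G' : PoGame A} (h : Le G H) (hG' : IsLeftOption G' G) : Lf G' H :=
  match h with
  | .intro _ _ hL _ _ => hL G' hG'

theorem Le.lf_isRightOption {H' : PoGame A} (h : Le G H) (hH' : IsRightOption H' H) : Lf G H' :=
  match h with
  | .intro _ _ _ hR _ => hR H' hH'

theorem Le.lf_of_isAtomic (h : Le G H) (hA : IsAtomic G ∨ IsAtomic H) : Lf G H :=
  match h with
  | .intro _ _ _ _ hA' => hA' hA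

theorem lf_of_lf_of_le_aux
    (hG : ∀ G', IsRightOption G' G → Le G' H → Le H K → Le G' K)
    (hH : ∀ H', IsLeftOption H' H → Le G H' → Lf H' K → Lf G K)
    (hK : ∀ K', IsLeftOption K' K → Le G H → Le H K' → Le G K')
    (hGH : Lf G H) (hHK : Le H K) : Lf G K := by
  cases hGH with
  | rightOption _ _ G' hG' hle => exact .rightOption _ _ G' hG' (hG G' hG' hle hHK)
  | leftOption _ _ H' hH' hle => exact hH H' hH' hle (hHK.isLeftOption_lf hH')
  | atom a b hab =>
    cases hHK.lf_of_isAtomic (.inl trivial) with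
    | rightOption _ _ _ h _ => exact h.elim
    | leftOption _ _ K' hK' hle => exact .leftOption _ _ K' hK' (hK K' hK' (le_atom_atom hab) hle)
    | atom b c hbc => exact .atom a c (hab.trans hbc)

theorem lf_of_le_of_lf_aux
    (hG : ∀ G', IsRightOption G' G → Le G' H → Le H K → Le G' K)
    (hH : ∀ H', IsRightOption H' H → Lf G H' → Le H' K → Lf G K)
    (hK : ∀ K', IsLeftOption K' K → Le G H → Le H K' → Le G K')
    (hGH : Le G H) (hHK : Lf H K) : Lf G K := by
  cases hHK with
  | rightOption _ _ H' hH' hle => exact hH H' hH' (hGH.lf_isRightOption hH') hle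
  | leftOption _ _ K' hK' hle => exact .leftOption _ _ K' hK' (hK K' hK' hGH hle)
  | atom a b hab =>
    cases hGH.lf_of_isAtomic (.inr trivial) with
    | rightOption _ _ G' hG' hle => exact .rightOption _ _ G' hG' (hG G' hG' hle (le_atom_atom hab))
    | leftOption _ _ _ h _ => exact h.elim
    | atom c a hca => exact .atom c b (hca.trans hab)

theorem le_trans_aux
    (hG : ∀ G', IsLeftOption G' G → Lf G' H → Le H K → Lf G' K)
    (hK : ∀ K', IsRightOption K' K → Le G H → Lf H K' → Lf G K')
    (hlf_le : Lf G H → Le H K → Lf G K) (hle_lf : Le G H → Lf H K → Lf G K)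
    (hGH : Le G H) (hHK : Le H K) : Le G K := by
  refine .intro _ _ (fun G' hG' => hG G' hG' (hGH.isLeftOption_lf hG') hHK)
    (fun K' hK' => hK K' hK' hGH (hHK.lf_isRightOption hK')) ?_
  rintro (hA | hA)
  · exact hlf_le (hGH.lf_of_isAtomic (.inl hA)) hHK
  · exact hle_lf hGH (hHK.lf_of_isAtomic (.inr hA))

end PoGame

open PoGame in
/-- Transitivity properties: if `G ≤ H ≤ K` then `G ≤ K`; if `G ⊲ H ≤ K` then `G ⊲ K`;
and if `G ≤ H ⊲ K` then `G ⊲ K`. -/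
theorem stmt_17 {A : Type u} [PartialOrder A] (G H K : PoGame A) :
    (Le G H → Le H K → Le G K) ∧
    (Lf G H → Le H K → Lf G K) ∧
    (Le G H → Lf H K → Lf G K) := by
  induction G, H, K using isOption_induction₃ with
  | h G H K ihG ihH ihK =>
    have lf_le : Lf G H → Le H K → Lf G K :=
      lf_of_lf_of_le_aux (fun G' h => (ihG G' (.inr h)).1) (fun H' h => (ihH H' (.inl h)).2.2)
        (fun K' h => (ihK K' (.inl h)).1)
    have le_lf : Le G H → Lf H K → Lf G K :=
      lf_of_le_of_lf_aux (fun G' h => (ihG G' (.inr h)).1) (fun H' h => (ihH H' (.inr h)).2.1)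
        (fun K' h => (ihK K' (.inl h)).1)
    exact ⟨le_trans_aux (fun G' h => (ihG G' (.inl h)).2.1) (fun K' h => (ihK K' (.inr h)).2.2)
      lf_le le_lf, lf_le, le_lf⟩
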